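/- Let E be a real inner product space, X ⊆ E a nonempty convex set, d : E → ℝ a convex Fréchet-differentiable function with Bregman divergence V(y,x) := d(y) − d(x) − ⟨∇d(x), y − x⟩, μ > 0, δ ≥ 0, and g : E → E a μ-relatively strongly monotone operator on X with z* ∈ X a solution of the Minty variational inequality. Let (z_k)_{k≥0}, (w_k)_{k≥0} in X and positive reals (L_k)_{k≥1} satisfy, for every k ≥ 0: (i) w_k minimizes y ↦ ⟨(1/L_{k+1})·g(z_k), y⟩ + V(y, z_k) over X; (ii) z_{k+1} minimizes u ↦ ⟨(1/L_{k+1})·g(w_k), u⟩ + V(u, z_k) + (μ/L_{k+1})·V(u, w_k) over X; (iii) ⟨g(z_k) − g(w_k), z_{k+1} − w_k⟩ ≤ L_{k+1}·( V(w_k, z_k) + V(z_{k+1}, w_k) ) + L_{k+1}·δ. Then for every k ≥ 0: V(z*, z_{k+1}) ≤ (∏_{i=1}^{k+1} (1 + μ/L_i)^{−1})·V(z*, z_0) + L_{k+1}·δ/(L_{k+1} + μ) + Σ_{j=1}^{k} ( L_j·δ/(L_j + μ) )·∏_{i=j+1}^{k+1} (1 + μ/L_i)^{−1}. -/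

import Mathlib

/-!
Each iteration is a pair of Bregman proximal steps. Their first-order optimality conditions,
rewritten with the three-point identity of the Bregman divergence, together with the line-search
inequality (iii) and the bound `⟪g w, z* - w⟫ ≤ -μ V(z*, w)` (which relative strong monotonicity
extracts from the Minty condition) give the one-step contraction
`V(z*, z_{k+1}) ≤ (1 + μ/L_{k+1})⁻¹ (V(z*, z_k) + δ)`. Unrolling this linear recursion gives the
estimate.
-/

open scoped RealInnerProductSpace
open Finset

section Bregman

variable {E : Type*} [NormedAddCommGroup E] [InnerProductSpace ℝ E] {d : E → ℝ} {Dd : E → E}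

def bregmanDiv (d : E → ℝ) (Dd : E → E) (y x : E) : ℝ := d y - d x - ⟪Dd x, y - x⟫

lemma bregmanDiv_eq_add_add_inner (u w z : E) :
    bregmanDiv d Dd u z = bregmanDiv d Dd u w + bregmanDiv d Dd w z + ⟪Dd w - Dd z, u - w⟫ := by
  simp only [bregmanDiv, inner_sub_left, inner_sub_right]
  ring

variable [CompleteSpace E]

lemma bregmanDiv_nonneg (hconv : ConvexOn ℝ Set.univ d) (hd : ∀ x, HasGradientAt d (Dd x) x)
    (y x : E) : 0 ≤ bregmanDiv d Dd y x := by
  have hline : HasDerivAt (d ∘ AffineMap.lineMap (k := ℝ) x y) ⟪Dd x, y - x⟫ 0 := by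
    have hdx := hasGradientAt_iff_hasFDerivAt.mp (hd x)
    rw [← AffineMap.lineMap_apply_zero (k := ℝ) x y] at hdx
    simpa using hdx.comp_hasDerivAt (0 : ℝ) AffineMap.hasDerivAt_lineMap
  have hslope := (hconv.comp_affineMap (AffineMap.lineMap x y)).le_slope_of_hasDerivAt
    (Set.mem_univ 0) (Set.mem_univ 1) zero_lt_one hline
  simp only [slope_def_field, Function.comp_apply, AffineMap.lineMap_apply_one,
    AffineMap.lineMap_apply_zero, sub_zero, div_one] at hslope
  simp only [bregmanDiv]
  linarith

lemma hasGradientAt_bregmanDiv_left {y : E} (hd : HasGradientAt d (Dd y) y) (x : E) :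
    HasGradientAt (bregmanDiv d Dd · x) (Dd y - Dd x) y := by
  rw [hasGradientAt_iff_hasFDerivAt] at hd ⊢
  have := (hd.sub_const (d x)).sub (((innerSL ℝ (Dd x)).hasFDerivAt).sub_const ⟪Dd x, x⟫)
  refine (this.congr_fderiv ?_).congr_of_eventuallyEq (Filter.Eventually.of_forall fun u => ?_)
  · ext v
    simp
  · simp [bregmanDiv, inner_sub_right]

lemma bregmanDiv_add_le_of_isMinOn {X : Set E} (hX : Convex ℝ X)
    (hd : ∀ x, HasGradientAt d (Dd x) x) {s c : ℝ} {a z p w u : E}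
    (hmin : IsMinOn (fun y => s * ⟪a, y⟫ + bregmanDiv d Dd y z + c * bregmanDiv d Dd y p) X w)
    (hw : w ∈ X) (hu : u ∈ X) :
    (1 + c) * bregmanDiv d Dd u w + bregmanDiv d Dd w z + c * bregmanDiv d Dd w p ≤
      s * ⟪a, u - w⟫ + bregmanDiv d Dd u z + c * bregmanDiv d Dd u p := by
  have hgrad (x : E) := hasGradientAt_iff_hasFDerivAt.mp (hasGradientAt_bregmanDiv_left (hd w) x)
  have hf := (((innerSL ℝ a).hasFDerivAt.const_mul s).add (hgrad z)).add ((hgrad p).const_mul c)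
  have hopt := hmin.localize.hasFDerivWithinAt_nonneg hf.hasFDerivWithinAt
    (sub_mem_posTangentConeAt_of_segment_subset (hX.segment_subset hw hu))
  simp only [add_apply, smul_apply, innerSL_apply_apply, InnerProductSpace.toDual_apply_apply,
    smul_eq_mul] at hopt
  rw [bregmanDiv_eq_add_add_inner u w z, bregmanDiv_eq_add_add_inner u w p]
  linear_combination hopt

end Bregman

/- The Minty condition is only available at points of `X`, so it is tested at
`w + t • (zs - w)` for `t ∈ (0, 1)` and the resulting bound is passed to the limit `t → 1`. -/
lemma inner_le_neg_mul_of_minty {E : Type*} [NormedAddCommGroup E] [InnerProductSpace ℝ E]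
    {X : Set E} (hX : Convex ℝ X) {V : E → E → ℝ} (hV : ∀ x y, 0 ≤ V x y) {w : E}
    (hVc : Continuous (V · w)) {μ : ℝ} (hμ : 0 ≤ μ) {g : E → E}
    (hmono : ∀ x ∈ X, ∀ y ∈ X, μ * (V y x + V x y) ≤ ⟪g y - g x, y - x⟫)
    {zs : E} (hzs : zs ∈ X) (hMinty : ∀ x ∈ X, ⟪g x, zs - x⟫ ≤ 0) (hw : w ∈ X) :
    ⟪g w, zs - w⟫ ≤ -(μ * V zs w) := by
  set F : ℝ → E := fun t => w + t • (zs - w)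
  have hopen : ∀ t ∈ Set.Ioo (0 : ℝ) 1, t * ⟪g w, zs - w⟫ + μ * V (F t) w ≤ 0 := by
    rintro t ⟨ht0, ht1⟩
    have hFt : F t ∈ X := hX.add_smul_sub_mem hw hzs ⟨ht0.le, ht1.le⟩
    have hMt : ⟪g (F t), zs - w⟫ ≤ 0 := by
      have h := hMinty _ hFt
      rw [show zs - F t = (1 - t) • (zs - w) by module, real_inner_smul_right] at h
      exact nonpos_of_mul_nonpos_right h (by linarith)
    have hmt := hmono w hw _ hFt
    rw [show F t - w = t • (zs - w) by module, real_inner_smul_right, inner_sub_left] at hmt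
    nlinarith [mul_nonneg hμ (hV w (F t))]
  have hcont : Continuous fun t => t * ⟪g w, zs - w⟫ + μ * V (F t) w := by fun_prop
  have h1 : (1 : ℝ) * ⟪g w, zs - w⟫ + μ * V (F 1) w ≤ 0 :=
    closure_minimal hopen (isClosed_le hcont continuous_const)
      (by rw [closure_Ioo zero_ne_one]; exact ⟨zero_le_one, le_rfl⟩)
  simp only [F, one_mul, one_smul, add_sub_cancel] at h1
  linarith

section Step

variable {E : Type*} [NormedAddCommGroup E] [InnerProductSpace ℝ E] [CompleteSpace E]
  {d : E → ℝ} {Dd : E → E}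

local notation "V" => bregmanDiv d Dd

lemma bregmanDiv_le_of_extragradient_step {X : Set E} (hX : Convex ℝ X)
    (hconv : ConvexOn ℝ Set.univ d) (hd : ∀ x, HasGradientAt d (Dd x) x)
    {μ ℓ δ : ℝ} (hμ : 0 < μ) (hℓ : 0 < ℓ) {g : E → E}
    (hmono : ∀ x ∈ X, ∀ y ∈ X, μ * (V y x + V x y) ≤ ⟪g y - g x, y - x⟫)
    {zs : E} (hzs : zs ∈ X) (hMinty : ∀ x ∈ X, ⟪g x, zs - x⟫ ≤ 0)
    {z w z' : E} (hw : w ∈ X) (hz' : z' ∈ X)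
    (hwmin : ∀ y ∈ X, (1 / ℓ) * ⟪g z, w⟫ + V w z ≤ (1 / ℓ) * ⟪g z, y⟫ + V y z)
    (hzmin : ∀ u ∈ X, (1 / ℓ) * ⟪g w, z'⟫ + V z' z + (μ / ℓ) * V z' w ≤
      (1 / ℓ) * ⟪g w, u⟫ + V u z + (μ / ℓ) * V u w)
    (hls : ⟪g z - g w, z' - w⟫ ≤ ℓ * (V w z + V z' w) + ℓ * δ) :
    V zs z' ≤ (1 + μ / ℓ)⁻¹ * (V zs z + δ) := by
  have hV0 := bregmanDiv_nonneg hconv hd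
  have hdc : Continuous d := continuous_iff_continuousAt.mpr fun x => (hd x).continuousAt
  have hA := bregmanDiv_add_le_of_isMinOn (c := 0) (p := z) hX hd
    (isMinOn_iff.mpr fun y hy => by simpa using hwmin y hy) hw hz'
  have hB := bregmanDiv_add_le_of_isMinOn hX hd (isMinOn_iff.mpr hzmin) hz' hzs
  have hC := inner_le_neg_mul_of_minty hX hV0 (by unfold bregmanDiv; fun_prop) hμ.le hmono hzs
    hMinty hw
  simp only [inner_sub_left, inner_sub_right, add_zero, zero_mul, one_mul] at hA hB hC hls
  rw [inv_mul_eq_div, le_div_iff₀ (by positivity)]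
  field_simp at hA hB ⊢
  linarith [mul_nonneg hμ.le (hV0 z' w)]

end Step

lemma le_prod_mul_add_sum_of_le_mul_add {a q c : ℕ → ℝ} (hq : ∀ n, 0 ≤ q (n + 1))
    (h : ∀ n, a (n + 1) ≤ q (n + 1) * (a n + c (n + 1))) (n : ℕ) :
    a n ≤ (∏ i ∈ Icc 1 n, q i) * a 0 + ∑ j ∈ Icc 1 n, q j * c j * ∏ i ∈ Icc (j + 1) n, q i := by
  induction n with
  | zero => simp
  | succ n ih =>
    have hsum : ∑ j ∈ Icc 1 n, q j * c j * ∏ i ∈ Icc (j + 1) (n + 1), q i =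
        (∑ j ∈ Icc 1 n, q j * c j * ∏ i ∈ Icc (j + 1) n, q i) * q (n + 1) := by
      rw [sum_mul]
      refine sum_congr rfl fun j hj => ?_
      rw [prod_Icc_succ_top (by grind)]
      ring
    calc a (n + 1) ≤ q (n + 1) * (a n + c (n + 1)) := h n
      _ ≤ q (n + 1) * ((∏ i ∈ Icc 1 n, q i) * a 0 +
          ∑ j ∈ Icc 1 n, q j * c j * ∏ i ∈ Icc (j + 1) n, q i + c (n + 1)) := by
        gcongr
        exact hq n
      _ = _ := by
        rw [prod_Icc_succ_top (by omega), sum_Icc_succ_top (by omega), hsum,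
          Icc_eq_empty_of_lt (Nat.lt_succ_self _), prod_empty]
        ring

theorem algorithm5_convergence_sharper_general
    {E : Type*} [NormedAddCommGroup E] [InnerProductSpace ℝ E] [CompleteSpace E]
    (X : Set E) (hXconv : Convex ℝ X)
    (d : E → ℝ) (hdconv : ConvexOn ℝ Set.univ d)
    (Dd : E → E) (hd : ∀ x, HasGradientAt d (Dd x) x)
    (V : E → E → ℝ) (hV : ∀ y x, V y x = d y - d x - ⟪Dd x, y - x⟫)
    (μ : ℝ) (hμ : 0 < μ) (g : E → E)
    (hmono : ∀ x ∈ X, ∀ y ∈ X, μ * (V y x + V x y) ≤ ⟪g y - g x, y - x⟫)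
    (zs : E) (hzs : zs ∈ X) (hMinty : ∀ x ∈ X, ⟪g x, zs - x⟫ ≤ 0)
    (z w : ℕ → E) (hzX : ∀ k, z k ∈ X) (hwX : ∀ k, w k ∈ X)
    (L : ℕ → ℝ) (hL : ∀ i ≥ 1, 0 < L i)
    (hwmin : ∀ k : ℕ, ∀ y ∈ X,
      (1 / L (k + 1)) * ⟪g (z k), w k⟫ + V (w k) (z k) ≤
        (1 / L (k + 1)) * ⟪g (z k), y⟫ + V y (z k))
    (hzmin : ∀ k : ℕ, ∀ u ∈ X,
      (1 / L (k + 1)) * ⟪g (w k), z (k + 1)⟫ + V (z (k + 1)) (z k) +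
          (μ / L (k + 1)) * V (z (k + 1)) (w k) ≤
        (1 / L (k + 1)) * ⟪g (w k), u⟫ + V u (z k) + (μ / L (k + 1)) * V u (w k))
    (δ : ℝ)
    (hls : ∀ k : ℕ, ⟪g (z k) - g (w k), z (k + 1) - w k⟫ ≤
      L (k + 1) * (V (w k) (z k) + V (z (k + 1)) (w k)) + L (k + 1) * δ) :
    ∀ k : ℕ, V zs (z (k + 1)) ≤
      (∏ i ∈ Icc 1 (k + 1), (1 + μ / L i)⁻¹) * V zs (z 0) +
        L (k + 1) * δ / (L (k + 1) + μ) +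
        ∑ j ∈ Icc 1 k, L j * δ / (L j + μ) * ∏ i ∈ Icc (j + 1) (k + 1), (1 + μ / L i)⁻¹ := by
  obtain rfl : V = bregmanDiv d Dd := funext₂ hV
  have hstep (n : ℕ) := bregmanDiv_le_of_extragradient_step hXconv hdconv hd hμ
    (hL (n + 1) n.succ_pos) hmono hzs hMinty (hwX n) (hzX (n + 1)) (hwmin n) (hzmin n) (hls n)
  have hq_nonneg (n : ℕ) : 0 ≤ (1 + μ / L (n + 1))⁻¹ := by
    have := hL (n + 1) n.succ_pos
    positivity
  have hq (j : ℕ) (hj : 1 ≤ j) : (1 + μ / L j)⁻¹ * δ = L j * δ / (L j + μ) := by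
    rw [one_add_div (hL j hj).ne', inv_div, div_mul_eq_mul_div]
  intro k
  have hunrolled := le_prod_mul_add_sum_of_le_mul_add (a := fun n => bregmanDiv d Dd zs (z n))
    (q := fun i => (1 + μ / L i)⁻¹) (c := fun _ => δ) hq_nonneg hstep (k + 1)
  rw [sum_Icc_succ_top (by omega), Icc_eq_empty_of_lt (Nat.lt_succ_self _), prod_empty, mul_one,
    hq (k + 1) (by omega), sum_congr rfl fun j hj => by rw [hq j (mem_Icc.mp hj).1]] at hunrolled
  linarith

/-- Remark after Theorem 4: sharper unrolled estimate for Algorithm 5. -/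
theorem algorithm5_convergence_sharper
    {E : Type*} [NormedAddCommGroup E] [InnerProductSpace ℝ E] [CompleteSpace E]
    (X : Set E) (hXne : X.Nonempty) (hXconv : Convex ℝ X)
    (d : E → ℝ) (hdconv : ConvexOn ℝ Set.univ d)
    (Dd : E → E) (hd : ∀ x, HasGradientAt d (Dd x) x)
    (V : E → E → ℝ) (hV : ∀ y x, V y x = d y - d x - ⟪Dd x, y - x⟫)
    (μ : ℝ) (hμ : 0 < μ) (g : E → E)
    (hmono : ∀ x ∈ X, ∀ y ∈ X, μ * (V y x + V x y) ≤ ⟪g y - g x, y - x⟫)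
    (zs : E) (hzs : zs ∈ X) (hMinty : ∀ x ∈ X, ⟪g x, zs - x⟫ ≤ 0)
    (z w : ℕ → E) (hzX : ∀ k, z k ∈ X) (hwX : ∀ k, w k ∈ X)
    (L : ℕ → ℝ) (hL : ∀ i ≥ 1, 0 < L i)
    (hwmin : ∀ k : ℕ, ∀ y ∈ X,
      (1 / L (k + 1)) * ⟪g (z k), w k⟫ + V (w k) (z k) ≤
        (1 / L (k + 1)) * ⟪g (z k), y⟫ + V y (z k))
    (hzmin : ∀ k : ℕ, ∀ u ∈ X,
      (1 / L (k + 1)) * ⟪g (w k), z (k + 1)⟫ + V (z (k + 1)) (z k) +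
          (μ / L (k + 1)) * V (z (k + 1)) (w k) ≤
        (1 / L (k + 1)) * ⟪g (w k), u⟫ + V u (z k) + (μ / L (k + 1)) * V u (w k))
    (δ : ℝ) (hδ : 0 ≤ δ)
    (hls : ∀ k : ℕ, ⟪g (z k) - g (w k), z (k + 1) - w k⟫ ≤
      L (k + 1) * (V (w k) (z k) + V (z (k + 1)) (w k)) + L (k + 1) * δ) :
    ∀ k : ℕ, V zs (z (k + 1)) ≤
      (∏ i ∈ Icc 1 (k + 1), (1 + μ / L i)⁻¹) * V zs (z 0) +
        L (k + 1) * δ / (L (k + 1) + μ) +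
        ∑ j ∈ Icc 1 k, L j * δ / (L j + μ) * ∏ i ∈ Icc (j + 1) (k + 1), (1 + μ / L i)⁻¹ :=
  algorithm5_convergence_sharper_general X hXconv d hdconv Dd hd V hV μ hμ g hmono zs hzs hMinty z w
    hzX hwX L hL hwmin hzmin δ hls
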